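/- Let n ≥ 2 and m ≥ 1, and let λ be an n-core. Then λ is also an (mn+1)-core if and only if for every residue i ∈ ℤ/nℤ, the number of removable i-boxes of λ is at most m. -/

import Mathlib

open scoped BigOperators

namespace FV

/-- The standard inner product on ℝⁿ. -/
def ip (n : ℕ) (v w : Fin n → ℝ) : ℝ := ∑ i, v i * w i

/-- Standard basis vector `e i` (0-indexed; junk `0` if `i ≥ n`). -/
def e (n : ℕ) (i : ℕ) : Fin n → ℝ := fun j => if (j : ℕ) = i then 1 else 0

/-- The subspace `V` of sum-zero vectors. -/
def V0 (n : ℕ) : Set (Fin n → ℝ) := {v | ∑ i, v i = 0}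

/-- Simple root `αᵢ = eᵢ − eᵢ₊₁` (paper 1-indexing: meaningful for 1 ≤ i ≤ n−1). -/
def sroot (n : ℕ) (i : ℕ) : Fin n → ℝ := e n (i - 1) - e n i

/-- The positive roots `eᵢ − eⱼ`, i < j. -/
def PosRoot (n : ℕ) : Set (Fin n → ℝ) := {α | ∃ a b : ℕ, a < b ∧ b < n ∧ α = e n a - e n b}

/-- All roots. -/
def Roots (n : ℕ) : Set (Fin n → ℝ) := PosRoot n ∪ (-PosRoot n)

/-- The highest root θ = e₁ − eₙ. -/
def theta (n : ℕ) : Fin n → ℝ := e n 0 - e n (n - 1)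

/-- Closed half-space H⁺_{α,k} ⊆ V. -/
def Hplus (n : ℕ) (α : Fin n → ℝ) (k : ℝ) : Set (Fin n → ℝ) := {v | v ∈ V0 n ∧ k ≤ ip n v α}

/-- Closed half-space H⁻_{α,k} ⊆ V. -/
def Hminus (n : ℕ) (α : Fin n → ℝ) (k : ℝ) : Set (Fin n → ℝ) := {v | v ∈ V0 n ∧ ip n v α ≤ k}

/-- Affine hyperplane H_{α,k} ⊆ V. -/
def Hyp (n : ℕ) (α : Fin n → ℝ) (k : ℝ) : Set (Fin n → ℝ) := {v | v ∈ V0 n ∧ ip n v α = k}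

/-- The (open) fundamental alcove A₀. -/
def A0 (n : ℕ) : Set (Fin n → ℝ) :=
  {v | v ∈ V0 n ∧ (∀ i : ℕ, 1 ≤ i → i ≤ n - 1 → 0 < ip n v (sroot n i)) ∧ ip n v (theta n) < 1}

/-- The dominant chamber. -/
def Dominant (n : ℕ) : Set (Fin n → ℝ) :=
  {v | v ∈ V0 n ∧ ∀ i : ℕ, 1 ≤ i → i ≤ n - 1 → 0 ≤ ip n v (sroot n i)}

/-- Coordinate swap, as a permutation of ℝⁿ. -/
def swapPerm (n : ℕ) (a b : Fin n) : Equiv.Perm (Fin n → ℝ) :=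
  (Equiv.swap a b).arrowCongr (Equiv.refl ℝ)

/-- The affine reflection s₀ : (a₁,...,aₙ) ↦ (aₙ+1, a₂, ..., a_{n−1}, a₁−1). -/
def s0 (n : ℕ) : Equiv.Perm (Fin n → ℝ) :=
  if h : 2 ≤ n then
    (swapPerm n ⟨0, by omega⟩ ⟨n - 1, by omega⟩).trans (Equiv.addLeft (e n 0 - e n (n - 1)))
  else Equiv.refl _

/-- The generators s₀, s₁, ..., s_{n−1} of the affine symmetric group; for i ≥ 1,
`gen n i` swaps the (i−1)-st and i-th (0-indexed) coordinates. -/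
def gen (n : ℕ) (i : Fin n) : Equiv.Perm (Fin n → ℝ) :=
  if (i : ℕ) = 0 then s0 n
  else swapPerm n ⟨(i : ℕ) - 1, lt_of_le_of_lt (Nat.sub_le _ _) i.isLt⟩ i

/-- The affine symmetric group Ŝₙ, acting on ℝⁿ. -/
def AffS (n : ℕ) : Subgroup (Equiv.Perm (Fin n → ℝ)) := Subgroup.closure (Set.range (gen n))

/-- The finite symmetric group Sₙ ⊆ Ŝₙ, generated by s₁, ..., s_{n−1}. -/
def SymS (n : ℕ) : Subgroup (Equiv.Perm (Fin n → ℝ)) :=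
  Subgroup.closure {g | ∃ i : Fin n, (i : ℕ) ≠ 0 ∧ g = gen n i}

/-- Coxeter length: word length in the generators. -/
noncomputable def len (n : ℕ) (w : Equiv.Perm (Fin n → ℝ)) : ℕ :=
  sInf {k | ∃ l : List (Fin n), l.length = k ∧ (l.map (gen n)).prod = w}

/-- w is a minimal length representative of its left coset wSₙ. -/
def IsMinCosetRep (n : ℕ) (w : Equiv.Perm (Fin n → ℝ)) : Prop :=
  w ∈ AffS n ∧ ∀ u ∈ SymS n, len n w ≤ len n (w * u)

/-- The complement (in V) of the m-Shi arrangement. -/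
def ShiComp (n : ℕ) (m : ℕ) : Set (Fin n → ℝ) :=
  V0 n \ ⋃ (α ∈ PosRoot n), ⋃ (k : ℤ), ⋃ (_ : -(m : ℤ) < k ∧ k ≤ (m : ℤ)), Hyp n α (k : ℝ)

/-- The alcoves wA₀ and w'A₀ lie in the same region (connected component) of the
complement of the m-Shi arrangement. -/
def SameRegion (n m : ℕ) (w w' : Equiv.Perm (Fin n → ℝ)) : Prop :=
  ∃ v ∈ ⇑w '' A0 n, ∃ v' ∈ ⇑w' '' A0 n, v' ∈ connectedComponentIn (ShiComp n m) v

/-- The alcove wA₀ is m-minimal. -/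
def MMinimal (n m : ℕ) (w : Equiv.Perm (Fin n → ℝ)) : Prop :=
  ∀ w' ∈ AffS n, SameRegion n m w w' → len n w ≤ len n w'

/-- `w(α + kδ) = β + lδ`: the affine-linear function v ↦ ⟨v,α⟩ + k, pulled back
along w⁻¹, equals v ↦ ⟨v,β⟩ + l on V. -/
def AffMapsTo (n : ℕ) (w : Equiv.Perm (Fin n → ℝ)) (α : Fin n → ℝ) (k : ℤ)
    (β : Fin n → ℝ) (l : ℤ) : Prop :=
  ∀ v ∈ V0 n, ip n (w⁻¹ v) α + (k : ℝ) = ip n v β + (l : ℝ)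

/-- α + kδ is a positive affine root. -/
def PosAff (n : ℕ) (α : Fin n → ℝ) (k : ℤ) : Prop :=
  α ∈ Roots n ∧ (0 < k ∨ (k = 0 ∧ α ∈ PosRoot n))

/-- α + kδ is a negative affine root. -/
def NegAff (n : ℕ) (α : Fin n → ℝ) (k : ℤ) : Prop :=
  α ∈ Roots n ∧ (k < 0 ∨ (k = 0 ∧ -α ∈ PosRoot n))

/-- α + kδ ∈ Inv(w). -/
def InInv (n : ℕ) (w : Equiv.Perm (Fin n → ℝ)) (α : Fin n → ℝ) (k : ℤ) : Prop :=
  PosAff n α k ∧ ∃ β : Fin n → ℝ, ∃ l : ℤ, NegAff n β l ∧ AffMapsTo n w α k β l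

/-- The simple affine root αᵢ, as a pair (finite root, δ-coefficient); α₀ = δ − θ. -/
def sAff (n : ℕ) (i : Fin n) : (Fin n → ℝ) × ℤ :=
  if (i : ℕ) = 0 then (-(theta n), 1) else (sroot n (i : ℕ), 0)

/-- Hook length of the (0-indexed) box (i,j):
1 + #boxes strictly to the right + #boxes strictly below. -/
def hook (lam : YoungDiagram) (i j : ℕ) : ℕ :=
  (lam.rowLen i - (j + 1)) + (lam.colLen j - (i + 1)) + 1

/-- λ is an s-core: no hook length is divisible by s. -/
def IsCore (s : ℕ) (lam : YoungDiagram) : Prop := ∀ c ∈ lam.cells, ¬ (s ∣ hook lam c.1 c.2)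

/-- A removable box of λ: a box of λ of hook length 1. -/
def Removable (lam : YoungDiagram) (c : ℕ × ℕ) : Prop := c ∈ lam ∧ hook lam c.1 c.2 = 1

/-- An addable box of λ: a box outside λ whose adjunction gives a partition. -/
def Addable (lam : YoungDiagram) (c : ℕ × ℕ) : Prop :=
  c ∉ lam ∧ ∃ mu : YoungDiagram, (mu.cells : Set (ℕ × ℕ)) = insert c (lam.cells : Set (ℕ × ℕ))

/-- The residue (j − i) mod n of a box. -/
def res (n : ℕ) (c : ℕ × ℕ) : ZMod n := (c.2 : ZMod n) - (c.1 : ZMod n)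

/-- A removable box of residue r. -/
def RemovableRes (n : ℕ) (r : ZMod n) (lam : YoungDiagram) (c : ℕ × ℕ) : Prop :=
  Removable lam c ∧ res n c = r

/-- An addable box of residue r. -/
def AddableRes (n : ℕ) (r : ZMod n) (lam : YoungDiagram) (c : ℕ × ℕ) : Prop :=
  Addable lam c ∧ res n c = r

open scoped Classical in
/-- The cell set of sᵣλ: adjoin all addable r-boxes if there are any, else delete all
removable r-boxes if there are any, else λ itself. -/
noncomputable def sActSet (n : ℕ) (r : ZMod n) (lam : YoungDiagram) : Set (ℕ × ℕ) :=
  if ∃ c, AddableRes n r lam c then (lam.cells : Set (ℕ × ℕ)) ∪ {c | AddableRes n r lam c}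
  else if ∃ c, RemovableRes n r lam c then
    (lam.cells : Set (ℕ × ℕ)) \ {c | RemovableRes n r lam c}
  else (lam.cells : Set (ℕ × ℕ))

open scoped Classical in
/-- sᵣλ as a Young diagram (junk value λ if the resulting cell set is not a diagram). -/
noncomputable def sFun (n : ℕ) (r : ZMod n) (lam : YoungDiagram) : YoungDiagram :=
  if h : ∃ mu : YoungDiagram, (mu.cells : Set (ℕ × ℕ)) = sActSet n r lam then h.choose else lam

/-- The partition s_{i₁}(s_{i₂}(⋯ s_{i_k}(∅))) for a word l = [i₁, ..., i_k]. -/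
noncomputable def wordAct (n : ℕ) (l : List (Fin n)) : YoungDiagram :=
  l.foldr (fun i mu => sFun n ((i : ℕ) : ZMod n) mu) ⊥

/-- `w∅ = λ`: some word for w sends the empty partition to λ. -/
def ActsToCore (n : ℕ) (w : Equiv.Perm (Fin n → ℝ)) (lam : YoungDiagram) : Prop :=
  ∃ l : List (Fin n), (l.map (gen n)).prod = w ∧ wordAct n l = lam

/-- The bead positions of the abacus of λ: first-column hook lengths and all
negative integers. -/
def beads (lam : YoungDiagram) : Set ℤ :=
  {z | z < 0 ∨ ∃ k : ℕ, (k, 0) ∈ lam ∧ z = (hook lam k 0 : ℤ)}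

/-- The largest level of runner c containing a bead (entry rn + c is at level r). -/
noncomputable def maxLevel (n : ℕ) (B : Set ℤ) (c : ℕ) : ℤ :=
  sSup {r : ℤ | r * (n : ℤ) + (c : ℤ) ∈ B}

/-- The balance number of an abacus. -/
noncomputable def balance (n : ℕ) (B : Set ℤ) : ℤ := ∑ c ∈ Finset.range n, maxLevel n B c

/-- Shift all abacus entries by d. -/
def shiftSet (d : ℤ) (B : Set ℤ) : Set ℤ := {z | z - d ∈ B}

/-- The vector n⃗(λ): largest bead levels of the runners of the balanced abacus of λ. -/
noncomputable def nvec (n : ℕ) (lam : YoungDiagram) : Fin n → ℤ :=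
  fun i => maxLevel n (shiftSet (-(balance n (beads lam))) (beads lam)) (i : ℕ)

/-- n⃗(λ) as a real vector. -/
noncomputable def nvecR (n : ℕ) (lam : YoungDiagram) : Fin n → ℝ :=
  fun i => ((nvec n lam i : ℤ) : ℝ)

/-- The root lattice Q ⊆ V: integer vectors with sum zero. -/
def QSet (n : ℕ) : Set (Fin n → ℝ) := {v | (∀ i, ∃ z : ℤ, v i = (z : ℝ)) ∧ v ∈ V0 n}

/-- The region 𝔄_m. -/
def Amreg (n m : ℕ) : Set (Fin n → ℝ) :=
  {v | v ∈ V0 n ∧ (∀ i : ℕ, 1 ≤ i → i ≤ n - 1 → -(m : ℝ) ≤ ip n v (sroot n i)) ∧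
    ip n v (theta n) ≤ (m : ℝ) + 1}

/-- The dominant regions of the m-Shi arrangement. -/
def DomRegions (n m : ℕ) : Set (Set (Fin n → ℝ)) :=
  {R | (∃ v ∈ ShiComp n m, R = connectedComponentIn (ShiComp n m) v) ∧ R ⊆ Dominant n}

/-- The m-minimal alcoves lying in the dominant chamber. -/
def MinDomAlcoves (n m : ℕ) : Set (Set (Fin n → ℝ)) :=
  {A | ∃ w ∈ AffS n, A = ⇑w '' A0 n ∧ MMinimal n m w ∧ A ⊆ Dominant n}

/-- The m-minimal alcoves. -/
def MinAlcoves (n m : ℕ) : Set (Set (Fin n → ℝ)) :=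
  {A | ∃ w ∈ AffS n, A = ⇑w '' A0 n ∧ MMinimal n m w}

/-- The alcoves contained in the region 𝔄_m. -/
def AmAlcoves (n m : ℕ) : Set (Set (Fin n → ℝ)) :=
  {A | ∃ w ∈ AffS n, A = ⇑w '' A0 n ∧ A ⊆ Amreg n m}

/-! With `ℓ(λ)` the number of rows, write the rows of `λ` as beta-numbers `βᵢ = λᵢ + ℓ(λ) - i - 1`
(extended below zero past the last row) and the columns as gap numbers `γⱼ = j + ℓ(λ) - λ'ⱼ`.
The two families partition `ℤ`, and the hook of box `(i, j)` is `βᵢ - γⱼ`. So `λ` has a hook of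
length `h` in row `i` iff `βᵢ - h` is a gap, and `λ` is an `s`-core iff the bead set is closed
under `x ↦ x - s`. For an `n`-core each runner `c + nℤ` of the abacus is therefore filled up to
a top level `A c`. The `(mn+1)`-core condition says `A c - A (c - 1) ≤ m` for every `c`, while
`A c - A (c - 1)` counts the beads `x ≡ c` with `x - 1` a gap, i.e. the removable boxes of the
residue class of `c - ℓ(λ)`. -/

section Abacus

variable {B : Set ℤ} {n : ℕ} {A : ℤ → ℤ}

lemma sub_mul_mem_of_forall_sub_mem {s x : ℤ} (hB : ∀ y ∈ B, y - s ∈ B) (hx : x ∈ B) :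
    ∀ t : ℕ, x - t * s ∈ B
  | 0 => by simpa using hx
  | t + 1 => by
    have := hB _ (sub_mul_mem_of_forall_sub_mem hB hx t)
    rwa [show x - t * s - s = x - ((t + 1 : ℕ) : ℤ) * s by push_cast; ring] at this

lemma exists_runner_top (hn : 0 < n) (hneg : ∀ x < 0, x ∈ B) (hbdd : BddAbove B)
    (hB : ∀ x ∈ B, x - n ∈ B) (c : ℤ) : ∃ a : ℤ, ∀ ρ : ℤ, ρ * n + c ∈ B ↔ ρ ≤ a := by
  set S := {ρ : ℤ | ρ * n + c ∈ B}
  have hn' : (1 : ℤ) ≤ n := by exact_mod_cast hn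
  obtain ⟨M, hM⟩ := hbdd
  have hS_bdd : BddAbove S := ⟨|M - c|, fun ρ hρ => by
    have := hM hρ
    rcases le_or_gt ρ 0 with h | h
    · exact h.trans (abs_nonneg _)
    · nlinarith [le_abs_self (M - c)]⟩
  have hS_ne : S.Nonempty := ⟨-|c| - 1, hneg _ (by nlinarith [le_abs_self c, abs_nonneg c])⟩
  refine ⟨sSup S, fun ρ => ⟨fun hρ => le_csSup hS_bdd hρ, fun hρ => ?_⟩⟩
  have htop := sub_mul_mem_of_forall_sub_mem hB
    (show sSup S * n + c ∈ B from Int.csSup_mem hS_ne hS_bdd) (sSup S - ρ).toNat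
  rwa [Int.toNat_of_nonneg (by omega), show sSup S * n + c - (sSup S - ρ) * n = ρ * n + c by ring]
    at htop

variable (hA : ∀ c ρ : ℤ, ρ * n + c ∈ B ↔ ρ ≤ A c)
include hA

lemma forall_sub_mem_iff_runner_top_sub_le (m : ℕ) :
    (∀ x ∈ B, x - ((m * n + 1 : ℕ) : ℤ) ∈ B) ↔ ∀ c, A c - A (c - 1) ≤ m := by
  push_cast
  constructor
  · intro h c
    have hc := h _ ((hA c (A c)).2 le_rfl)
    rw [show A c * n + c - (m * n + 1) = (A c - m) * n + (c - 1) by ring, hA] at hc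
    omega
  · intro h x hx
    have hx0 : 0 ≤ A x := (hA x 0).1 (by simpa using hx)
    rw [show x - (m * n + 1) = (-m : ℤ) * n + (x - 1) by ring, hA]
    linarith [h x]

lemma ncard_runner_beads_after_gap (hn : n ≠ 0) (c : ℤ) :
    {x | x ∈ B ∧ x - 1 ∉ B ∧ (n : ℤ) ∣ x - c}.ncard = (A c - A (c - 1)).toNat := by
  have hinj : Function.Injective (fun ρ : ℤ => ρ * n + c) := fun a b hab =>
    mul_right_cancel₀ (by exact_mod_cast hn : (n : ℤ) ≠ 0) (add_right_cancel hab)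
  have himage : {x | x ∈ B ∧ x - 1 ∉ B ∧ (n : ℤ) ∣ x - c}
      = (fun ρ : ℤ => ρ * n + c) '' Set.Ioc (A (c - 1)) (A c) := by
    ext x
    simp only [Set.mem_ofPred_eq, Set.mem_image, Set.mem_Ioc]
    constructor
    · rintro ⟨hx, hx1, ρ, hρ⟩
      obtain rfl : x = ρ * n + c := by linear_combination hρ
      rw [show ρ * n + c - 1 = ρ * n + (c - 1) by ring, hA] at hx1
      exact ⟨ρ, ⟨by omega, (hA c ρ).1 hx⟩, rfl⟩
    · rintro ⟨ρ, ⟨hlo, hhi⟩, rfl⟩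
      refine ⟨(hA c ρ).2 hhi, ?_, ρ, by ring⟩
      rw [show ρ * n + c - 1 = ρ * n + (c - 1) by ring, hA]
      omega
  rw [himage, Set.ncard_image_of_injective _ hinj, ← Finset.coe_Ioc, Set.ncard_coe_finset,
    Int.card_Ioc]

end Abacus

section BetaNumbers

open YoungDiagram

variable {lam : YoungDiagram} {n i j : ℕ}

/-- For a row `i` of `lam` this is the first-column hook length `hook lam i 0`; below the last
row it runs through the negative integers. -/
def betaNum (lam : YoungDiagram) (i : ℕ) : ℤ := lam.rowLen i + lam.colLen 0 - i - 1

def gapNum (lam : YoungDiagram) (j : ℕ) : ℤ := j + lam.colLen 0 - lam.colLen j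

lemma colLen_le_colLen_zero (lam : YoungDiagram) (j : ℕ) : lam.colLen j ≤ lam.colLen 0 :=
  lam.colLen_anti 0 j j.zero_le

lemma one_le_hook (lam : YoungDiagram) (i j : ℕ) : 1 ≤ hook lam i j := by
  unfold hook
  omega

lemma betaNum_strictAnti (lam : YoungDiagram) : StrictAnti (betaNum lam) := fun i i' h => by
  have := lam.rowLen_anti i i' h.le
  unfold betaNum
  omega

lemma le_gapNum (lam : YoungDiagram) (j : ℕ) : (j : ℤ) ≤ gapNum lam j := by
  have := colLen_le_colLen_zero lam j
  unfold gapNum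
  omega

lemma hook_eq_betaNum_sub_gapNum (h : (i, j) ∈ lam) :
    (hook lam i j : ℤ) = betaNum lam i - gapNum lam j := by
  have h1 := mem_iff_lt_rowLen.1 h
  have h2 := mem_iff_lt_colLen.1 h
  unfold hook betaNum gapNum
  omega

lemma betaNum_sub_gapNum_neg (h : (i, j) ∉ lam) : betaNum lam i - gapNum lam j < 0 := by
  have h1 : lam.rowLen i ≤ j := not_lt.1 (mt mem_iff_lt_rowLen.2 h)
  have h2 : lam.colLen j ≤ i := not_lt.1 (mt mem_iff_lt_colLen.2 h)
  unfold betaNum gapNum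
  omega

lemma betaNum_ne_gapNum (lam : YoungDiagram) (i j : ℕ) : betaNum lam i ≠ gapNum lam j := by
  by_cases h : (i, j) ∈ lam
  · have h1 := hook_eq_betaNum_sub_gapNum h
    have h2 := one_le_hook lam i j
    omega
  · have := betaNum_sub_gapNum_neg h
    omega

lemma mem_beads_iff {x : ℤ} : x ∈ beads lam ↔ x < 0 ∨ ∃ i, betaNum lam i = x := by
  constructor
  · rintro (hx | ⟨i, hi, rfl⟩)
    · exact Or.inl hx
    · exact Or.inr ⟨i, by simp [hook_eq_betaNum_sub_gapNum hi, gapNum]⟩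
  · rintro (hx | ⟨i, rfl⟩)
    · exact Or.inl hx
    by_cases hi : (i, 0) ∈ lam
    · exact Or.inr ⟨i, hi, by simp [hook_eq_betaNum_sub_gapNum hi, gapNum]⟩
    · exact Or.inl (by simpa [gapNum] using betaNum_sub_gapNum_neg hi)

lemma betaNum_mem_beads (lam : YoungDiagram) (i : ℕ) : betaNum lam i ∈ beads lam :=
  mem_beads_iff.2 (Or.inr ⟨i, rfl⟩)

lemma mem_beads_of_neg {x : ℤ} (hx : x < 0) : x ∈ beads lam :=
  mem_beads_iff.2 (Or.inl hx)

lemma bddAbove_beads (lam : YoungDiagram) : BddAbove (beads lam) := ⟨betaNum lam 0, fun x hx => by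
  rcases mem_beads_iff.1 hx with hx | ⟨i, rfl⟩
  · have : 0 ≤ betaNum lam 0 + 1 := by unfold betaNum; omega
    omega
  · exact (betaNum_strictAnti lam).antitone i.zero_le⟩

lemma exists_gapNum_le_lt {x : ℤ} (hx : 0 ≤ x) :
    ∃ j, gapNum lam j ≤ x ∧ x < gapNum lam (j + 1) := by
  classical
  have hex : ∃ j, x < gapNum lam (j + 1) :=
    ⟨x.toNat, by have := le_gapNum lam (x.toNat + 1); omega⟩
  refine ⟨Nat.find hex, ?_, Nat.find_spec hex⟩
  rcases h : Nat.find hex with _ | j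
  · simpa [gapNum] using hx
  · exact not_lt.1 (Nat.find_min hex (by omega : j < Nat.find hex))

lemma not_mem_beads_iff {x : ℤ} : x ∉ beads lam ↔ ∃ j, gapNum lam j = x := by
  rw [mem_beads_iff]
  constructor
  · intro hx
    rw [not_or, not_lt, not_exists] at hx
    obtain ⟨hx0, hβ⟩ := hx
    obtain ⟨j, hle, hlt⟩ := exists_gapNum_le_lt hx0
    refine ⟨j, hle.antisymm (not_lt.1 fun hgt => ?_)⟩
    -- `x` lies strictly between two consecutive gaps, so it is the beta-number of row `k`,
    -- whose last box is in column `j`.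
    have := colLen_le_colLen_zero lam j
    unfold gapNum at hgt hlt
    push_cast at hlt
    obtain ⟨k, hk⟩ : ∃ k : ℕ, (k : ℤ) = j + lam.colLen 0 - x := ⟨_, Int.toNat_of_nonneg (by omega)⟩
    have h1 := mem_iff_lt_rowLen.1 (mem_iff_lt_colLen.2 (by omega : k < lam.colLen j))
    have h2 := mt mem_iff_lt_rowLen.2 (mt mem_iff_lt_colLen.1 (by omega : ¬ k < lam.colLen (j + 1)))
    exact hβ k (by unfold betaNum; omega)
  · rintro ⟨j, rfl⟩ (hneg | ⟨i, hi⟩)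
    · have := le_gapNum lam j
      omega
    · exact betaNum_ne_gapNum lam i j hi

lemma exists_hook_eq_iff {h : ℕ} (hh : 1 ≤ h) :
    (∃ j, (i, j) ∈ lam ∧ hook lam i j = h) ↔ betaNum lam i - h ∉ beads lam := by
  rw [not_mem_beads_iff]
  constructor
  · rintro ⟨j, hj, hhook⟩
    exact ⟨j, by have := hook_eq_betaNum_sub_gapNum hj; omega⟩
  · rintro ⟨j, hj⟩
    by_cases hmem : (i, j) ∈ lam
    · exact ⟨j, hmem, by have := hook_eq_betaNum_sub_gapNum hmem; omega⟩
    · have := betaNum_sub_gapNum_neg hmem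
      omega

lemma isCore_iff_forall_sub_mem_beads {s : ℕ} (hs : 0 < s) :
    IsCore s lam ↔ ∀ x ∈ beads lam, x - s ∈ beads lam := by
  constructor
  · intro hcore x hx
    rcases mem_beads_iff.1 hx with hneg | ⟨i, rfl⟩
    · exact mem_beads_of_neg (by omega)
    · by_contra hgap
      obtain ⟨j, hj, hhook⟩ := (exists_hook_eq_iff hs).2 hgap
      exact hcore (i, j) ((mem_cells _).2 hj) (hhook ▸ dvd_rfl)
  · rintro hB ⟨i, j⟩ hc ⟨t, ht⟩
    have hmem := sub_mul_mem_of_forall_sub_mem hB (betaNum_mem_beads lam i) t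
    refine (exists_hook_eq_iff (ht ▸ one_le_hook lam i j)).1 ⟨j, (mem_cells _).1 hc, ht⟩ ?_
    rwa [Nat.cast_mul, mul_comm]

lemma Removable.rowLen_eq {b : ℕ × ℕ} (h : Removable lam b) : lam.rowLen b.1 = b.2 + 1 := by
  have h1 := mem_iff_lt_rowLen.1 h.1
  have h2 := h.2
  unfold hook at h2
  omega

lemma res_eq_of_rowLen_eq (h : lam.rowLen i = j + 1) :
    res n (i, j) = ((betaNum lam i - lam.colLen 0 : ℤ) : ZMod n) := by
  rw [show betaNum lam i - lam.colLen 0 = (j : ℤ) - i by unfold betaNum; omega]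
  simp [res]

lemma ncard_removableRes_eq_ncard_beads (c : ℤ) :
    {b | RemovableRes n ((c - lam.colLen 0 : ℤ) : ZMod n) lam b}.ncard
      = {x | x ∈ beads lam ∧ x - 1 ∉ beads lam ∧ (n : ℤ) ∣ x - c}.ncard := by
  have hres : ∀ b, Removable lam b →
      (res n b = ((c - lam.colLen 0 : ℤ) : ZMod n) ↔ (n : ℤ) ∣ betaNum lam b.1 - c) := by
    rintro ⟨i, j⟩ hb
    rw [res_eq_of_rowLen_eq hb.rowLen_eq, ZMod.intCast_eq_intCast_iff_dvd_sub, ← dvd_neg]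
    ring_nf
  have himage : {x | x ∈ beads lam ∧ x - 1 ∉ beads lam ∧ (n : ℤ) ∣ x - c}
      = (fun b => betaNum lam b.1) ''
          {b | RemovableRes n ((c - lam.colLen 0 : ℤ) : ZMod n) lam b} := by
    ext x
    constructor
    · rintro ⟨hx, hx1, hdvd⟩
      obtain ⟨i, rfl⟩ : ∃ i, betaNum lam i = x := (mem_beads_iff.1 hx).resolve_left
        fun hneg => hx1 (mem_beads_of_neg (by omega))
      obtain ⟨j, hj, hhook⟩ := (exists_hook_eq_iff le_rfl).2 (by simpa using hx1)
      exact ⟨(i, j), ⟨⟨hj, hhook⟩, (hres _ ⟨hj, hhook⟩).2 hdvd⟩, rfl⟩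
    · rintro ⟨⟨i, j⟩, ⟨hb, hr⟩, rfl⟩
      exact ⟨betaNum_mem_beads lam i, by simpa using (exists_hook_eq_iff le_rfl).1 ⟨j, hb⟩,
        (hres _ hb).1 hr⟩
  have hinj : Set.InjOn (fun b => betaNum lam b.1)
      {b | RemovableRes n ((c - lam.colLen 0 : ℤ) : ZMod n) lam b} := by
    rintro ⟨i, j⟩ ⟨hb, -⟩ ⟨i', j'⟩ ⟨hb', -⟩ h
    obtain rfl : i = i' := (betaNum_strictAnti lam).injective h
    have := hb.rowLen_eq
    have := hb'.rowLen_eq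
    simp_all
  rw [himage, hinj.ncard_image]

end BetaNumbers

theorem statement15_general (n : ℕ) (hn : 2 ≤ n) (m : ℕ) (lam : YoungDiagram)
    (hcore : IsCore n lam) :
    IsCore (m * n + 1) lam ↔
      ∀ r : ZMod n, {c : ℕ × ℕ | RemovableRes n r lam c}.ncard ≤ m := by
  choose A hA using exists_runner_top (by omega) (fun _ => mem_beads_of_neg) (bddAbove_beads lam)
    ((isCore_iff_forall_sub_mem_beads (by omega)).1 hcore)
  have hcount (c : ℤ) :
      {b | RemovableRes n ((c - lam.colLen 0 : ℤ) : ZMod n) lam b}.ncard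
        = (A c - A (c - 1)).toNat :=
    (ncard_removableRes_eq_ncard_beads c).trans (ncard_runner_beads_after_gap hA (by omega) c)
  rw [isCore_iff_forall_sub_mem_beads (by omega), forall_sub_mem_iff_runner_top_sub_le hA]
  constructor
  · intro h r
    obtain ⟨z, rfl⟩ := ZMod.intCast_surjective r
    have := hcount (z + lam.colLen 0)
    simp only [add_sub_cancel_right] at this
    have := h (z + lam.colLen 0)
    omega
  · intro h c
    have := hcount c ▸ h ((c - lam.colLen 0 : ℤ) : ZMod n)
    omega

/-- An n-core λ is also an (mn+1)-core iff for every residue i it has at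
most m removable i-boxes. -/
theorem statement15 (n : ℕ) (hn : 2 ≤ n) (m : ℕ) (hm : 1 ≤ m) (lam : YoungDiagram)
    (hcore : IsCore n lam) :
    IsCore (m * n + 1) lam ↔
      ∀ r : ZMod n, {c : ℕ × ℕ | RemovableRes n r lam c}.ncard ≤ m :=
  statement15_general n hn m lam hcore

end FV
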